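/- (Verification / weak duality along trajectories.) In the PWA optimal control setting with continuous running costs L_i and continuous terminal cost L_T, suppose v : ℝⁿ → ℝ is continuously differentiable and satisfies (i) ∇v(y) · (A_i y + a_i + B_i w) + L_i(y,w) ≥ 0 for every i = 1,…,r and every (y,w) ∈ X_i × U, and (ii) v(y) ≤ L_T(y) for every y ∈ X_T. Then for every admissible process (T, u, x) the cost satisfies L_T(x(T)) + Σ_{i=1}^r ∫₀ᵀ L_i(x(t),u(t)) 1_{X_i}(x(t)) dt ≥ v(x(0)). -/

import Mathlib

open MeasureTheory Set
open scoped RealInnerProductSpace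

/-- An admissible process for the piecewise-affine optimal control problem with cells `X i`,
control set `U`, dynamics `ẋ = A i x + a i + B i u` on `X i`, and terminal set `XT`.
The trajectory `x` is absolutely continuous, encoded as the integral of an integrable
velocity `d` that agrees a.e. with the piecewise-affine vector field. -/
structure PWAProcess (n m r : ℕ)
    (X : Fin r → Set (EuclideanSpace ℝ (Fin n)))
    (U : Set (EuclideanSpace ℝ (Fin m)))
    (A : Fin r → (EuclideanSpace ℝ (Fin n) →L[ℝ] EuclideanSpace ℝ (Fin n)))
    (a : Fin r → EuclideanSpace ℝ (Fin n))
    (B : Fin r → (EuclideanSpace ℝ (Fin m) →L[ℝ] EuclideanSpace ℝ (Fin n)))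
    (XT : Set (EuclideanSpace ℝ (Fin n))) where
  /-- terminal time -/
  T : ℝ
  T_pos : 0 < T
  /-- control -/
  u : ℝ → EuclideanSpace ℝ (Fin m)
  u_meas : Measurable u
  u_mem : ∀ t ∈ Icc (0 : ℝ) T, u t ∈ U
  /-- state trajectory -/
  x : ℝ → EuclideanSpace ℝ (Fin n)
  /-- a.e. derivative of the trajectory -/
  d : ℝ → EuclideanSpace ℝ (Fin n)
  d_meas : Measurable d
  d_intble : IntegrableOn d (Icc (0 : ℝ) T)
  /-- absolute continuity: `x` is the integral of its a.e. derivative -/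
  x_eq : ∀ t ∈ Icc (0 : ℝ) T, x t = x 0 + ∫ s in (0 : ℝ)..t, d s
  x_mem : ∀ t ∈ Icc (0 : ℝ) T, x t ∈ ⋃ i, X i
  /-- the ODE holds for almost every time -/
  ode : ∀ᵐ t ∂(volume.restrict (Icc (0 : ℝ) T)),
      ∀ i, x t ∈ X i → d t = A i (x t) + a i + B i (u t)
  /-- times spent on overlaps of cells are negligible -/
  overlap : volume {t ∈ Icc (0 : ℝ) T | ∃ i j, i ≠ j ∧ x t ∈ X i ∧ x t ∈ X j} = 0
  terminal : x T ∈ XT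

/-- The `i`-th local occupation measure of an admissible process:
`μ i (A) = Leb {t ∈ [0,T] : x t ∈ X i and (x t, u t) ∈ A}`. -/
noncomputable def PWAProcess.occ {n m r : ℕ}
    {X : Fin r → Set (EuclideanSpace ℝ (Fin n))}
    {U : Set (EuclideanSpace ℝ (Fin m))}
    {A : Fin r → (EuclideanSpace ℝ (Fin n) →L[ℝ] EuclideanSpace ℝ (Fin n))}
    {a : Fin r → EuclideanSpace ℝ (Fin n)}
    {B : Fin r → (EuclideanSpace ℝ (Fin m) →L[ℝ] EuclideanSpace ℝ (Fin n))}
    {XT : Set (EuclideanSpace ℝ (Fin n))}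
    (P : PWAProcess n m r X U A a B XT) (i : Fin r) :
    Measure (EuclideanSpace ℝ (Fin n) × EuclideanSpace ℝ (Fin m)) :=
  Measure.map (fun t => (P.x t, P.u t))
    (volume.restrict {t | t ∈ Icc (0 : ℝ) P.T ∧ P.x t ∈ X i})

/-!
Along an admissible process, `v ∘ x` is absolutely continuous, since `v` is locally Lipschitz
and `x` is the primitive of an integrable velocity; hence `v (x T) - v (x 0)` is the integral
of `⟪∇v (x t), ẋ t⟫`. For almost every `t` the point `x t` lies in exactly one cell `X i`,
where `ẋ t = A i (x t) + a i + B i (u t)` and the running cost reduces to `L i (x t, u t)`,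
so the first hypothesis makes the integrand plus the running cost nonnegative. The terminal
hypothesis `v ≤ L_T` on `X_T` finishes the estimate.
-/

open Filter
open scoped Interval

theorem AbsolutelyContinuousOnInterval.of_dist_le_mul {X Y : Type*} [PseudoMetricSpace X]
    [PseudoMetricSpace Y] {f : ℝ → X} {g : ℝ → Y} {a b : ℝ}
    (hg : AbsolutelyContinuousOnInterval g a b) (K : ℝ)
    (hfg : ∀ s ∈ uIcc a b, ∀ t ∈ uIcc a b, dist (f s) (f t) ≤ K * dist (g s) (g t)) :
    AbsolutelyContinuousOnInterval f a b := by
  unfold AbsolutelyContinuousOnInterval at hg ⊢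
  have hKg := hg.const_mul K
  rw [mul_zero] at hKg
  refine squeeze_zero' (.of_forall fun _ ↦ Finset.sum_nonneg fun _ _ ↦ dist_nonneg) ?_ hKg
  filter_upwards [eventually_inf_principal.mpr (.of_forall fun _ ↦ id)] with E hE
  rw [Finset.mul_sum]
  exact Finset.sum_le_sum fun i hi ↦ hfg _ (hE.1 i hi).1 _ (hE.1 i hi).2

theorem LocallyLipschitz.comp_absolutelyContinuousOnInterval {F Y : Type*}
    [SeminormedAddCommGroup F] [PseudoMetricSpace Y] {g : F → Y} {f : ℝ → F} {a b : ℝ}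
    (hg : LocallyLipschitz g) (hf : AbsolutelyContinuousOnInterval f a b) :
    AbsolutelyContinuousOnInterval (g ∘ f) a b := by
  obtain ⟨K, hK⟩ := hg.locallyLipschitzOn.exists_lipschitzOnWith_of_compact
    (isCompact_uIcc.image_of_continuousOn hf.continuousOn)
  exact hf.of_dist_le_mul K fun s hs t ht ↦
    hK.dist_le_mul _ (mem_image_of_mem f hs) _ (mem_image_of_mem f ht)

theorem AbsolutelyContinuousOnInterval.intervalIntegrable_and_integral_eq_sub_of_ae_hasDerivAt
    {f f' : ℝ → ℝ} {a b : ℝ} (hf : AbsolutelyContinuousOnInterval f a b)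
    (hf' : ∀ᵐ t, t ∈ uIcc a b → HasDerivAt f (f' t) t) :
    IntervalIntegrable f' volume a b ∧ ∫ t in a..b, f' t = f b - f a := by
  have hderiv : ∀ᵐ t, t ∈ Ι a b → deriv f t = f' t := by
    filter_upwards [hf'] with t ht ht' using (ht (uIoc_subset_uIcc ht')).deriv
  refine ⟨hf.intervalIntegrable_deriv.congr_ae ?_, ?_⟩
  · exact (ae_restrict_iff' measurableSet_uIoc).mpr hderiv
  · rw [← hf.integral_deriv_eq_sub]
    exact (intervalIntegral.integral_congr_ae hderiv).symm

section Primitive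

variable {E : Type*} [NormedAddCommGroup E] [NormedSpace ℝ E]

theorem IntervalIntegrable.absolutelyContinuousOnInterval_primitive {d : ℝ → E} {a b : ℝ}
    (hd : IntervalIntegrable d volume a b) (x₀ : E) :
    AbsolutelyContinuousOnInterval (fun t ↦ x₀ + ∫ s in a..t, d s) a b := by
  refine (hd.norm.absolutelyContinuousOnInterval_intervalIntegral left_mem_uIcc).of_dist_le_mul 1
    fun s hs t ht ↦ ?_
  have hint : ∀ c ∈ uIcc a b, IntervalIntegrable d volume a c :=
    fun c hc ↦ hd.mono_set (uIcc_subset_uIcc_left hc)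
  rw [one_mul, dist_add_left, dist_eq_norm', dist_eq_norm', Real.norm_eq_abs,
    intervalIntegral.integral_interval_sub_left (hint t ht) (hint s hs),
    intervalIntegral.integral_interval_sub_left (hint t ht).norm (hint s hs).norm]
  exact intervalIntegral.norm_integral_le_abs_integral_norm

variable [CompleteSpace E]

theorem IntervalIntegrable.ae_hasDerivAt_comp_primitive {v : E → ℝ} (hv : Differentiable ℝ v)
    {d : ℝ → E} {a b : ℝ} (hd : IntervalIntegrable d volume a b) (x₀ : E) :
    ∀ᵐ t, t ∈ uIcc a b → HasDerivAt (fun t ↦ v (x₀ + ∫ s in a..t, d s))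
      (fderiv ℝ v (x₀ + ∫ s in a..t, d s) (d t)) t := by
  filter_upwards [hd.ae_hasDerivAt_integral] with t ht ht'
  exact (hv _).hasFDerivAt.comp_hasDerivAt t ((ht ht' a left_mem_uIcc).const_add x₀)

theorem ContDiff.intervalIntegrable_and_integral_fderiv_comp_primitive {v : E → ℝ}
    (hv : ContDiff ℝ 1 v) {d : ℝ → E} {a b : ℝ} (hd : IntervalIntegrable d volume a b) (x₀ : E) :
    IntervalIntegrable (fun t ↦ fderiv ℝ v (x₀ + ∫ s in a..t, d s) (d t)) volume a b ∧
      ∫ t in a..b, fderiv ℝ v (x₀ + ∫ s in a..t, d s) (d t)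
        = v (x₀ + ∫ s in a..b, d s) - v x₀ := by
  have hac := hv.locallyLipschitz.comp_absolutelyContinuousOnInterval
    (hd.absolutelyContinuousOnInterval_primitive x₀)
  simpa using hac.intervalIntegrable_and_integral_eq_sub_of_ae_hasDerivAt
    (hd.ae_hasDerivAt_comp_primitive (hv.differentiable one_ne_zero) x₀)

end Primitive

namespace PWAProcess

variable {n m r : ℕ} {X : Fin r → Set (EuclideanSpace ℝ (Fin n))}
  {U : Set (EuclideanSpace ℝ (Fin m))}
  {A : Fin r → (EuclideanSpace ℝ (Fin n) →L[ℝ] EuclideanSpace ℝ (Fin n))}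
  {a : Fin r → EuclideanSpace ℝ (Fin n)}
  {B : Fin r → (EuclideanSpace ℝ (Fin m) →L[ℝ] EuclideanSpace ℝ (Fin n))}
  {XT : Set (EuclideanSpace ℝ (Fin n))} (P : PWAProcess n m r X U A a B XT)

theorem intervalIntegrable_d : IntervalIntegrable P.d volume 0 P.T :=
  (intervalIntegrable_iff_integrableOn_Icc_of_le P.T_pos.le).mpr P.d_intble

theorem eqOn_primitive : EqOn P.x (fun t ↦ P.x 0 + ∫ s in 0..t, P.d s) (uIcc 0 P.T) := by
  rw [uIcc_of_le P.T_pos.le]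
  exact P.x_eq

theorem continuousOn_x : ContinuousOn P.x (Icc 0 P.T) := by
  rw [← uIcc_of_le P.T_pos.le]
  exact (P.intervalIntegrable_d.absolutelyContinuousOnInterval_primitive _).continuousOn.congr
    P.eqOn_primitive

theorem intervalIntegrable_and_integral_inner_gradient {v : EuclideanSpace ℝ (Fin n) → ℝ}
    (hv : ContDiff ℝ 1 v) :
    IntervalIntegrable (fun t ↦ ⟪gradient v (P.x t), P.d t⟫) volume 0 P.T ∧
      ∫ t in 0..P.T, ⟪gradient v (P.x t), P.d t⟫ = v (P.x P.T) - v (P.x 0) := by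
  obtain ⟨hint, hftc⟩ :=
    hv.intervalIntegrable_and_integral_fderiv_comp_primitive P.intervalIntegrable_d (P.x 0)
  have hcongr : EqOn (fun t ↦ fderiv ℝ v (P.x 0 + ∫ s in 0..t, P.d s) (P.d t))
      (fun t ↦ ⟪gradient v (P.x t), P.d t⟫) (uIcc 0 P.T) := fun t ht ↦ by
    simp only [← P.eqOn_primitive ht, inner_gradient_left]
  refine ⟨(intervalIntegrable_congr (hcongr.mono uIoc_subset_uIcc)).mp hint, ?_⟩
  rw [← intervalIntegral.integral_congr hcongr, hftc, P.eqOn_primitive right_mem_uIcc]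

theorem intervalIntegrable_cost (hU : IsCompact U) {S : Set (EuclideanSpace ℝ (Fin n))}
    (hS : MeasurableSet S) {ℓ : EuclideanSpace ℝ (Fin n) × EuclideanSpace ℝ (Fin m) → ℝ}
    (hℓ : Continuous ℓ) :
    IntervalIntegrable (fun t ↦ ℓ (P.x t, P.u t) * S.indicator (fun _ ↦ (1 : ℝ)) (P.x t))
      volume 0 P.T := by
  rw [intervalIntegrable_iff_integrableOn_Icc_of_le P.T_pos.le]
  obtain ⟨C, hC⟩ := ((isCompact_Icc.image_of_continuousOn P.continuousOn_x).prod hU)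
    |>.exists_bound_of_continuousOn hℓ.continuousOn
  have hx := P.continuousOn_x.aestronglyMeasurable (μ := volume) measurableSet_Icc
  refine (integrable_const C).mono' ?_ (ae_restrict_of_forall_mem measurableSet_Icc fun t ht ↦ ?_)
  · exact (hℓ.comp_aestronglyMeasurable (hx.prodMk P.u_meas.aestronglyMeasurable)).mul
      ((measurable_const.indicator hS).comp_aemeasurable hx.aemeasurable).aestronglyMeasurable
  · calc ‖ℓ (P.x t, P.u t) * S.indicator (fun _ ↦ (1 : ℝ)) (P.x t)‖
        ≤ ‖ℓ (P.x t, P.u t)‖ * ‖(1 : ℝ)‖ := by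
          rw [norm_mul]
          gcongr
          exact norm_indicator_le_norm_self _ _
      _ ≤ C := by
          rw [norm_one, mul_one]
          exact hC _ ⟨mem_image_of_mem _ ht, P.u_mem t ht⟩

theorem ae_eq_of_mem_of_mem :
    ∀ᵐ t ∂volume.restrict (Icc 0 P.T), ∀ i j, P.x t ∈ X i → P.x t ∈ X j → i = j := by
  filter_upwards [ae_restrict_mem measurableSet_Icc,
    ae_restrict_of_ae (measure_eq_zero_iff_ae_notMem.mp P.overlap)] with t ht hsingle i j hi hj
  by_contra hij
  exact hsingle ⟨ht, i, j, hij, hi, hj⟩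

theorem ae_inner_gradient_add_cost_nonneg {v : EuclideanSpace ℝ (Fin n) → ℝ}
    {L : Fin r → (EuclideanSpace ℝ (Fin n) × EuclideanSpace ℝ (Fin m) → ℝ)}
    (hpos : ∀ i, ∀ y ∈ X i, ∀ w ∈ U, 0 ≤ ⟪gradient v y, A i y + a i + B i w⟫ + L i (y, w)) :
    ∀ᵐ t ∂volume.restrict (Icc 0 P.T), 0 ≤ ⟪gradient v (P.x t), P.d t⟫ +
      ∑ i, L i (P.x t, P.u t) * (X i).indicator (fun _ ↦ (1 : ℝ)) (P.x t) := by
  filter_upwards [ae_restrict_mem measurableSet_Icc, P.ode, P.ae_eq_of_mem_of_mem]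
    with t ht hode hsingle
  obtain ⟨i, hi⟩ := mem_iUnion.mp (P.x_mem t ht)
  have hcost : ∑ j, L j (P.x t, P.u t) * (X j).indicator (fun _ ↦ (1 : ℝ)) (P.x t)
      = L i (P.x t, P.u t) := by
    rw [Finset.sum_eq_single_of_mem i (Finset.mem_univ i) fun j _ hji ↦ ?_, indicator_of_mem hi,
      mul_one]
    rw [indicator_of_notMem fun hj ↦ hji (hsingle j i hj hi), mul_zero]
  rw [hcost, hode i hi]
  exact hpos i _ hi _ (P.u_mem t ht)

end PWAProcess

theorem pwa_verification_general {n m r : ℕ}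
    (X : Fin r → Set (EuclideanSpace ℝ (Fin n))) (hX : ∀ i, IsCompact (X i))
    (U : Set (EuclideanSpace ℝ (Fin m))) (hU : IsCompact U)
    (A : Fin r → (EuclideanSpace ℝ (Fin n) →L[ℝ] EuclideanSpace ℝ (Fin n)))
    (a : Fin r → EuclideanSpace ℝ (Fin n))
    (B : Fin r → (EuclideanSpace ℝ (Fin m) →L[ℝ] EuclideanSpace ℝ (Fin n)))
    (XT : Set (EuclideanSpace ℝ (Fin n)))
    (L : Fin r → (EuclideanSpace ℝ (Fin n) × EuclideanSpace ℝ (Fin m) → ℝ))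
    (hL : ∀ i, Continuous (L i))
    (LT : EuclideanSpace ℝ (Fin n) → ℝ)
    (v : EuclideanSpace ℝ (Fin n) → ℝ) (hv : ContDiff ℝ 1 v)
    (hpos : ∀ i, ∀ y ∈ X i, ∀ w ∈ U,
      0 ≤ ⟪gradient v y, A i y + a i + B i w⟫ + L i (y, w))
    (hterm : ∀ y ∈ XT, v y ≤ LT y)
    (P : PWAProcess n m r X U A a B XT) :
    v (P.x 0) ≤ LT (P.x P.T) + ∑ i, ∫ t in (0 : ℝ)..P.T,
        L i (P.x t, P.u t) * (X i).indicator (fun _ => (1 : ℝ)) (P.x t) := by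
  obtain ⟨hint, hftc⟩ := P.intervalIntegrable_and_integral_inner_gradient hv
  have hcost i := P.intervalIntegrable_cost hU (hX i).isClosed.measurableSet (hL i)
  have hnonneg := intervalIntegral.integral_nonneg_of_ae_restrict P.T_pos.le
    (P.ae_inner_gradient_add_cost_nonneg hpos)
  have hcosts : IntervalIntegrable (fun t ↦ ∑ i, L i (P.x t, P.u t) *
      (X i).indicator (fun _ ↦ (1 : ℝ)) (P.x t)) volume 0 P.T := by
    rw [← Finset.sum_fn]
    exact IntervalIntegrable.sum Finset.univ fun i _ ↦ hcost i
  rw [intervalIntegral.integral_add hint hcosts,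
    intervalIntegral.integral_finsetSum fun i _ ↦ hcost i, hftc] at hnonneg
  linarith [hterm _ P.terminal]

/-- verification / weak duality along trajectories. If `v` is `C¹` with
`⟪∇v(y), Aᵢ y + aᵢ + Bᵢ w⟫ + Lᵢ(y,w) ≥ 0` on each `Xᵢ × U` and `v ≤ L_T` on `X_T`, then the
cost of every admissible process is at least `v(x(0))`. -/
theorem pwa_verification {n m r : ℕ}
    (X : Fin r → Set (EuclideanSpace ℝ (Fin n))) (hX : ∀ i, IsCompact (X i))
    (hdisj : ∀ i j, i ≠ j → Disjoint (interior (X i)) (interior (X j)))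
    (U : Set (EuclideanSpace ℝ (Fin m))) (hU : IsCompact U)
    (A : Fin r → (EuclideanSpace ℝ (Fin n) →L[ℝ] EuclideanSpace ℝ (Fin n)))
    (a : Fin r → EuclideanSpace ℝ (Fin n))
    (B : Fin r → (EuclideanSpace ℝ (Fin m) →L[ℝ] EuclideanSpace ℝ (Fin n)))
    (XT : Set (EuclideanSpace ℝ (Fin n))) (hXT : IsCompact XT)
    (L : Fin r → (EuclideanSpace ℝ (Fin n) × EuclideanSpace ℝ (Fin m) → ℝ))
    (hL : ∀ i, Continuous (L i))
    (LT : EuclideanSpace ℝ (Fin n) → ℝ) (hLT : Continuous LT)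
    (v : EuclideanSpace ℝ (Fin n) → ℝ) (hv : ContDiff ℝ 1 v)
    (hpos : ∀ i, ∀ y ∈ X i, ∀ w ∈ U,
      0 ≤ ⟪gradient v y, A i y + a i + B i w⟫ + L i (y, w))
    (hterm : ∀ y ∈ XT, v y ≤ LT y)
    (P : PWAProcess n m r X U A a B XT) :
    v (P.x 0) ≤ LT (P.x P.T) + ∑ i, ∫ t in (0 : ℝ)..P.T,
        L i (P.x t, P.u t) * (X i).indicator (fun _ => (1 : ℝ)) (P.x t) :=
  pwa_verification_general X hX U hU A a B XT L hL LT v hv hpos hterm P
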